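/- Let p, q be distinct primes and Ω a tile of ℤ_{p^n} × ℤ_q written as Ω = ⨆_{j=0}^{q−1} (Ω_j × {j}). If |Ω| = p^m q, then |Ω_j| = p^m for every j, and all the Ω_j are p-homogeneous subsets of ℤ_{p^n} with a common branched level set. -/

import Mathlib

open Finset

/-- `(Ω, T)` is a tiling pair: every element of `G` has a unique representation
`ω + t` with `ω ∈ Ω`, `t ∈ T`. -/
def IsTilingPair {G : Type*} [AddCommGroup G] (Ω T : Finset G) : Prop :=
  ∀ g : G, ∃! x : G × G, x.1 ∈ Ω ∧ x.2 ∈ T ∧ x.1 + x.2 = g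

/-- `C ⊆ ℤ_{p^n}` is `p`-homogeneous with branched level set `I ⊆ {0,…,n-1}`. -/
def IsPHomogeneous (p n : ℕ) (C : Finset (ZMod (p ^ n))) (I : Finset ℕ) : Prop :=
  I ⊆ Finset.range n ∧
    ∀ i ∈ Finset.range n, ∀ x ∈ C,
      ((C.filter fun y => y.val % p ^ i = x.val % p ^ i).image
          fun y => y.val % p ^ (i + 1)).card = if i ∈ I then p else 1

section Helpers

variable {α : Type*} [DecidableEq α]

lemma filter_card_one_of_existsUnique {s : Finset α} {P : α → Prop} [DecidablePred P]
    (h : ∃! a, a ∈ s ∧ P a) : (s.filter P).card = 1 := by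
  obtain ⟨a, ⟨ha, hPa⟩, hu⟩ := h
  rw [Finset.card_eq_one]
  refine ⟨a, ?_⟩
  ext b
  simp only [mem_filter, mem_singleton]
  constructor
  · rintro ⟨hb, hPb⟩; exact hu b ⟨hb, hPb⟩
  · rintro rfl; exact ⟨ha, hPa⟩

lemma all_one_of_sum_eq_card {s : Finset α} {f : α → ℕ}
    (h1 : ∀ x ∈ s, 1 ≤ f x) (h2 : ∑ x ∈ s, f x = s.card) : ∀ x ∈ s, f x = 1 := by
  by_contra hc
  push_neg at hc
  obtain ⟨x, hx, hfx⟩ := hc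
  have h2' : 2 ≤ f x := by
    have := h1 x hx; omega
  have : s.card + 1 ≤ ∑ x ∈ s, f x := by
    have e1 : s.card = (∑ _x ∈ s, 1) := by simp
    rw [e1, ← Finset.sum_erase_add s f hx, ← Finset.sum_erase_add s (fun _ => 1) hx]
    have : ∑ i ∈ s.erase x, 1 ≤ ∑ i ∈ s.erase x, f i :=
      Finset.sum_le_sum (fun i hi => h1 i (Finset.mem_of_mem_erase hi))
    omega
  omega

end Helpers

section TilingCard

variable {G : Type*} [AddCommGroup G] [Fintype G] [DecidableEq G]

lemma tiling_card_mul {Ω T : Finset G} (h : IsTilingPair Ω T) :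
    Ω.card * T.card = Fintype.card G := by
  classical
  have := Finset.card_eq_sum_card_fiberwise
    (f := fun z : G × G => z.1 + z.2) (s := Ω ×ˢ T) (t := Finset.univ)
    (fun x _ => Finset.mem_univ _)
  rw [Finset.card_product] at this
  rw [this]
  have : ∀ g ∈ (Finset.univ : Finset G),
      ((Ω ×ˢ T).filter fun z => z.1 + z.2 = g).card = 1 := by
    intro g _
    apply filter_card_one_of_existsUnique
    obtain ⟨x, ⟨h1, h2, h3⟩, hu⟩ := h g
    exact ⟨x, ⟨Finset.mem_product.2 ⟨h1, h2⟩, h3⟩,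
      fun y ⟨hy, hy3⟩ => hu y ⟨(Finset.mem_product.1 hy).1, (Finset.mem_product.1 hy).2, hy3⟩⟩
  rw [Finset.sum_congr rfl this]
  simp

end TilingCard

open Polynomial in
lemma flat_of_sum_zero {p : ℕ} (hp : p.Prime) (i : ℕ) (C : ℕ → ℕ) {ζ : ℂ}
    (hζ : IsPrimitiveRoot ζ (p ^ (i + 1)))
    (h0 : ∑ r ∈ range (p ^ (i + 1)), (C r : ℂ) * ζ ^ r = 0) :
    ∀ r ∈ range (p ^ (i + 1)), ∀ r' ∈ range (p ^ (i + 1)),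
      r % p ^ i = r' % p ^ i → C r = C r' := by
  have hp1 : 1 < p := hp.one_lt
  have hpi : 0 < p ^ i := pow_pos hp.pos i
  have hpow : p ^ (i + 1) = p ^ i * p := pow_succ p i
  set φt := p ^ i * (p - 1) with hφt
  have hφpos : 0 < φt := Nat.mul_pos hpi (by omega)
  set d : ℕ → ℤ := fun k => (C k : ℤ) - (C (k % p ^ i + (p - 1) * p ^ i) : ℤ) with hd
  -- reindex the main sum
  have hsplit : ∑ st ∈ range p ×ˢ range (p ^ i),
      (C (st.2 + st.1 * p ^ i) : ℂ) * ζ ^ (st.2 + st.1 * p ^ i) = 0 := by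
    rw [← h0]
    apply Finset.sum_nbij' (fun st => st.2 + st.1 * p ^ i) (fun r => (r / p ^ i, r % p ^ i))
    · intro st hst
      simp only [mem_product, mem_range] at hst
      simp only [mem_range, hpow]
      have e : st.1 * p ^ i = p ^ i * st.1 := Nat.mul_comm _ _
      have h1 : p ^ i * (st.1 + 1) = p ^ i * st.1 + p ^ i := Nat.mul_succ _ _
      have h2 : p ^ i * (st.1 + 1) ≤ p ^ i * p := Nat.mul_le_mul_left _ (by omega)
      omega
    · intro r hr
      simp only [mem_range, hpow] at hr
      simp only [mem_product, mem_range]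
      exact ⟨Nat.div_lt_of_lt_mul (by omega), Nat.mod_lt _ hpi⟩
    · intro st hst
      simp only [mem_product, mem_range] at hst
      have h1 : (st.2 + st.1 * p ^ i) % p ^ i = st.2 := by
        rw [Nat.add_mul_mod_self_right, Nat.mod_eq_of_lt hst.2]
      have h2 : (st.2 + st.1 * p ^ i) / p ^ i = st.1 := by
        rw [Nat.add_mul_div_right _ _ hpi, Nat.div_eq_of_lt hst.2, zero_add]
      rw [h1, h2]
    · intro r hr
      exact (Nat.mod_add_div' r (p ^ i)).symm ▸ rfl
    · intro st hst; rfl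
  rw [Finset.sum_product] at hsplit
  -- hsplit : ∑ t ∈ range p, ∑ s ∈ range (p^i), C(s+t*p^i) * ζ^(s+t*p^i) = 0
  set μ : ℂ := ζ ^ (p ^ i) with hμ
  have hμprim : IsPrimitiveRoot μ p := hζ.pow (pow_pos hp.pos _) hpow
  have hμsum : ∑ t ∈ range p, μ ^ t = 0 := hμprim.geom_sum_eq_zero hp1
  have hE : ∑ t ∈ range p, ∑ s ∈ range (p ^ i),
      (C (s + (p - 1) * p ^ i) : ℂ) * ζ ^ (s + t * p ^ i) = 0 := by
    rw [Finset.sum_comm]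
    have : ∀ s ∈ range (p ^ i), ∑ t ∈ range p,
        (C (s + (p - 1) * p ^ i) : ℂ) * ζ ^ (s + t * p ^ i) = 0 := by
      intro s _
      have : ∀ t ∈ range p, (C (s + (p - 1) * p ^ i) : ℂ) * ζ ^ (s + t * p ^ i)
          = ((C (s + (p - 1) * p ^ i) : ℂ) * ζ ^ s) * μ ^ t := by
        intro t _
        rw [pow_add, hμ, ← pow_mul]
        ring
      rw [Finset.sum_congr rfl this, ← Finset.mul_sum, hμsum, mul_zero]
    rw [Finset.sum_congr rfl this, Finset.sum_const, smul_zero]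
  have hD : ∑ t ∈ range p, ∑ s ∈ range (p ^ i),
      ((d (s + t * p ^ i) : ℂ)) * ζ ^ (s + t * p ^ i) = 0 := by
    have : ∀ t ∈ range p, ∀ s ∈ range (p ^ i),
        ((d (s + t * p ^ i) : ℂ)) * ζ ^ (s + t * p ^ i)
          = (C (s + t * p ^ i) : ℂ) * ζ ^ (s + t * p ^ i)
            - (C (s + (p - 1) * p ^ i) : ℂ) * ζ ^ (s + t * p ^ i) := by
      intro t _ s hs
      simp only [mem_range] at hs
      have hmod : (s + t * p ^ i) % p ^ i = s := by
        rw [Nat.add_mul_mod_self_right, Nat.mod_eq_of_lt hs]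
      simp only [hd, hmod]
      push_cast
      ring
    calc ∑ t ∈ range p, ∑ s ∈ range (p ^ i),
        ((d (s + t * p ^ i) : ℂ)) * ζ ^ (s + t * p ^ i)
        = ∑ t ∈ range p, ∑ s ∈ range (p ^ i),
          ((C (s + t * p ^ i) : ℂ) * ζ ^ (s + t * p ^ i)
            - (C (s + (p - 1) * p ^ i) : ℂ) * ζ ^ (s + t * p ^ i)) := by
          refine Finset.sum_congr rfl fun t ht => Finset.sum_congr rfl fun s hs => ?_
          exact this t ht s hs
      _ = (∑ t ∈ range p, ∑ s ∈ range (p ^ i),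
            (C (s + t * p ^ i) : ℂ) * ζ ^ (s + t * p ^ i))
          - ∑ t ∈ range p, ∑ s ∈ range (p ^ i),
            (C (s + (p - 1) * p ^ i) : ℂ) * ζ ^ (s + t * p ^ i) := by
          rw [← Finset.sum_sub_distrib]
          exact Finset.sum_congr rfl fun t _ => by rw [Finset.sum_sub_distrib]
      _ = 0 := by rw [hsplit, hE, sub_zero]
  -- drop the t = p-1 term (it is zero) and reindex to range φt
  have hlast : ∀ s ∈ range (p ^ i), ((d (s + (p - 1) * p ^ i) : ℂ)) * ζ ^ (s + (p - 1) * p ^ i) = 0 := by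
    intro s hs
    simp only [mem_range] at hs
    have hmod : (s + (p - 1) * p ^ i) % p ^ i = s := by
      rw [Nat.add_mul_mod_self_right, Nat.mod_eq_of_lt hs]
    simp only [hd, hmod, sub_self, Int.cast_zero, zero_mul]
  have hDsmall : ∑ t ∈ range (p - 1), ∑ s ∈ range (p ^ i),
      ((d (s + t * p ^ i) : ℂ)) * ζ ^ (s + t * p ^ i) = 0 := by
    have e : p - 1 + 1 = p := by omega
    have hs := Finset.sum_range_succ
      (fun t => ∑ s ∈ range (p ^ i), ((d (s + t * p ^ i) : ℂ)) * ζ ^ (s + t * p ^ i)) (p - 1)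
    rw [e] at hs
    rw [hs, Finset.sum_eq_zero hlast, add_zero] at hD
    exact hD
  have hφsum : ∑ k ∈ range φt, ((d k : ℂ)) * ζ ^ k = 0 := by
    rw [← Finset.sum_product'] at hDsmall
    rw [← hDsmall]
    apply Finset.sum_nbij' (fun k => ((k / p ^ i : ℕ), (k % p ^ i : ℕ)))
      (fun st => st.2 + st.1 * p ^ i)
    · intro k hk
      simp only [mem_range, hφt] at hk
      simp only [mem_product, mem_range]
      refine ⟨?_, Nat.mod_lt _ hpi⟩
      exact Nat.div_lt_of_lt_mul hk
    · intro st hst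
      simp only [mem_product, mem_range] at hst
      simp only [mem_range, hφt]
      have e : st.1 * p ^ i = p ^ i * st.1 := Nat.mul_comm _ _
      have h1 : p ^ i * (st.1 + 1) = p ^ i * st.1 + p ^ i := Nat.mul_succ _ _
      have h2 : p ^ i * (st.1 + 1) ≤ p ^ i * (p - 1) := Nat.mul_le_mul_left _ (by omega)
      omega
    · intro k hk
      exact (Nat.mod_add_div' k (p ^ i)).symm ▸ rfl
    · intro st hst
      simp only [mem_product, mem_range] at hst
      have h1 : (st.2 + st.1 * p ^ i) % p ^ i = st.2 := by
        rw [Nat.add_mul_mod_self_right, Nat.mod_eq_of_lt hst.2]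
      have h2 : (st.2 + st.1 * p ^ i) / p ^ i = st.1 := by
        rw [Nat.add_mul_div_right _ _ hpi, Nat.div_eq_of_lt hst.2, zero_add]
      rw [h1, h2]
    · intro k hk
      have e := Nat.mod_add_div' k (p ^ i)
      simp only
      rw [e]
  have hdzero : ∀ k, k < φt → d k = 0 := by
    intro k hk
    by_contra hne
    set D : Polynomial ℚ := ∑ j ∈ range φt, Polynomial.C ((d j : ℚ)) * X ^ j with hDdef
    have hcoeff : ∀ j, j < φt → D.coeff j = (d j : ℚ) := by
      intro j hj
      rw [hDdef, Polynomial.finset_sum_coeff]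
      have he : ∀ l ∈ range φt,
          (Polynomial.C ((d l : ℚ)) * X ^ l).coeff j = if l = j then (d l : ℚ) else 0 := by
        intro l _
        rw [Polynomial.coeff_C_mul, Polynomial.coeff_X_pow]
        by_cases h : j = l
        · subst h; simp
        · rw [if_neg h, if_neg (Ne.symm h), mul_zero]
      rw [Finset.sum_congr rfl he, Finset.sum_ite_eq' (range φt) j (fun l => (d l : ℚ))]
      rw [if_pos (mem_range.2 hj)]
    have hDne : D ≠ 0 := by
      intro h
      apply hne
      have := hcoeff k hk
      rw [h, Polynomial.coeff_zero] at this
      exact_mod_cast this.symm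
    have haev : Polynomial.aeval ζ D = 0 := by
      rw [hDdef, map_sum]
      have he : ∀ j ∈ range φt,
          Polynomial.aeval ζ (Polynomial.C ((d j : ℚ)) * X ^ j) = ((d j : ℂ)) * ζ ^ j := by
        intro j _
        rw [map_mul, map_pow, Polynomial.aeval_C, Polynomial.aeval_X]
        norm_num
      rw [Finset.sum_congr rfl he, hφsum]
    have hmin : minpoly ℚ ζ ∣ D := minpoly.dvd ℚ ζ haev
    rw [← Polynomial.cyclotomic_eq_minpoly_rat hζ (pow_pos hp.pos _)] at hmin
    have hdeg1 : (Polynomial.cyclotomic (p ^ (i + 1)) ℚ).natDegree = φt := by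
      rw [Polynomial.natDegree_cyclotomic, Nat.totient_prime_pow hp (Nat.succ_pos i)]
      simp [hφt]
    have hdeg2 : D.natDegree ≤ φt - 1 := by
      rw [hDdef]
      apply Polynomial.natDegree_sum_le_of_forall_le
      intro j hj
      refine le_trans (Polynomial.natDegree_C_mul_le _ _) ?_
      rw [Polynomial.natDegree_X_pow]
      have := mem_range.1 hj
      omega
    have hle := Polynomial.natDegree_le_of_dvd hmin hDne
    omega
  intro r hr r' hr' hmod
  simp only [mem_range] at hr hr'
  have key : ∀ r'', r'' < p ^ (i + 1) → C r'' = C (r'' % p ^ i + (p - 1) * p ^ i) := by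
    intro r'' hrr
    by_cases hlt : r'' < φt
    · have h := hdzero r'' hlt
      simp only [hd] at h
      omega
    · have hdiv : r'' / p ^ i = p - 1 := by
        have h1 : r'' < p ^ i * p := by rw [← hpow]; exact hrr
        have h4 := Nat.div_lt_of_lt_mul h1
        have h2 : p ^ i * (p - 1) ≤ r'' := le_of_not_gt (by rwa [← hφt])
        have h3 : (p - 1) ≤ r'' / p ^ i :=
          (Nat.le_div_iff_mul_le hpi).2 (by rw [Nat.mul_comm]; exact h2)
        omega
      have he : r'' % p ^ i + (p - 1) * p ^ i = r'' := by
        conv_rhs => rw [← Nat.mod_add_div' r'' (p ^ i)]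
        rw [hdiv]
      rw [he]
  rw [key r hr, key r' hr', hmod]

section Counting

variable {β : Type*} [DecidableEq β] (P : ℕ) (B : Finset β) (φ : β → ℕ)

def cnt (i r : ℕ) : ℕ := (B.filter fun b => φ b % P ^ i = r).card

def occ (i : ℕ) : Finset ℕ := (range (P ^ i)).filter fun r => cnt P B φ i r ≠ 0

def NN (i : ℕ) : ℕ := (occ P B φ i).card

def Splits (i : ℕ) : Prop := ∀ r ∈ range (P ^ (i + 1)), ∀ r' ∈ range (P ^ (i + 1)),
  r % P ^ i = r' % P ^ i → cnt P B φ (i + 1) r = cnt P B φ (i + 1) r'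

instance : DecidablePred (Splits P B φ) := by
  unfold Splits; infer_instance

variable {P} (hP : 1 < P)
include hP

lemma level_arith {i r0 t : ℕ} (hr0 : r0 < P ^ i) (ht : t < P) :
    r0 + t * P ^ i < P ^ (i + 1) := by
  have e : t * P ^ i = P ^ i * t := Nat.mul_comm _ _
  have h1 : P ^ i * (t + 1) = P ^ i * t + P ^ i := Nat.mul_succ _ _
  have h2 : P ^ i * (t + 1) ≤ P ^ i * P := Nat.mul_le_mul_left _ (by omega)
  have h3 : P ^ (i + 1) = P ^ i * P := pow_succ P i
  omega

lemma mod_level_iff {i x r0 t : ℕ} (hr0 : r0 < P ^ i) (ht : t < P) :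
    x % P ^ (i + 1) = r0 + t * P ^ i ↔ (x % P ^ i = r0 ∧ x % P ^ (i + 1) / P ^ i = t) := by
  have hpi : 0 < P ^ i := pow_pos (Nat.zero_lt_of_lt hP) i
  have hmm : x % P ^ (i + 1) % P ^ i = x % P ^ i :=
    Nat.mod_mod_of_dvd x (pow_dvd_pow P (Nat.le_succ i))
  have hdm := Nat.mod_add_div' (x % P ^ (i + 1)) (P ^ i)
  constructor
  · intro h
    constructor
    · rw [← hmm, h, Nat.add_mul_mod_self_right, Nat.mod_eq_of_lt hr0]
    · rw [h, Nat.add_mul_div_right _ _ hpi, Nat.div_eq_of_lt hr0, zero_add]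
  · rintro ⟨h1, h2⟩
    rw [← hdm, hmm, h1, h2]

lemma cnt_sum (i : ℕ) : ∑ r ∈ range (P ^ i), cnt P B φ i r = B.card := by
  simp only [cnt]
  exact (Finset.card_eq_sum_card_fiberwise (f := fun b => φ b % P ^ i) (s := B)
    (t := range (P ^ i)) (fun b _ => mem_range.2 (Nat.mod_lt _ (pow_pos (Nat.zero_lt_of_lt hP) i)))).symm

lemma cnt_fiber {i r0 : ℕ} (hr0 : r0 < P ^ i) :
    cnt P B φ i r0 = ∑ t ∈ range P, cnt P B φ (i + 1) (r0 + t * P ^ i) := by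
  have hpi : 0 < P ^ i := pow_pos (Nat.zero_lt_of_lt hP) i
  have hpi1 : 0 < P ^ (i + 1) := pow_pos (Nat.zero_lt_of_lt hP) _
  rw [cnt, Finset.card_eq_sum_card_fiberwise (f := fun b => φ b % P ^ (i + 1) / P ^ i)
    (t := range P)]
  · apply Finset.sum_congr rfl
    intro t htm
    rw [Finset.filter_filter]
    congr 1
    apply Finset.filter_congr
    intro b _
    rw [mod_level_iff hP hr0 (mem_range.1 htm)]
  · intro b hb
    rw [Finset.mem_coe, mem_range]
    apply Nat.div_lt_of_lt_mul
    rw [← pow_succ]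
    exact Nat.mod_lt _ hpi1

lemma NN_zero (hB : B.Nonempty) : NN P B φ 0 = 1 := by
  have h0 : cnt P B φ 0 0 = B.card := by
    simp [cnt, Nat.mod_one]
  have hne : cnt P B φ 0 0 ≠ 0 := by
    rw [h0]
    exact Finset.card_ne_zero_of_mem hB.choose_spec
  simp only [NN, occ, pow_zero, Finset.range_one, Finset.filter_singleton, if_pos hne,
    Finset.card_singleton]

lemma NN_le_card (i : ℕ) : NN P B φ i ≤ B.card := by
  calc NN P B φ i = ∑ _r ∈ occ P B φ i, 1 := by rw [Finset.sum_const, smul_eq_mul, mul_one, NN]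
  _ ≤ ∑ r ∈ occ P B φ i, cnt P B φ i r :=
      Finset.sum_le_sum (fun r hr => Nat.one_le_iff_ne_zero.2 (mem_filter.1 hr).2)
  _ ≤ ∑ r ∈ range (P ^ i), cnt P B φ i r :=
      Finset.sum_le_sum_of_subset (Finset.filter_subset _ _)
  _ = B.card := cnt_sum B φ hP i

lemma parent_mem {i r : ℕ} (hr : r ∈ occ P B φ (i + 1)) : r % P ^ i ∈ occ P B φ i := by
  have hpi : 0 < P ^ i := pow_pos (Nat.zero_lt_of_lt hP) i
  obtain ⟨hrr, hrc⟩ := mem_filter.1 hr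
  rw [mem_range] at hrr
  have hlt : r % P ^ i < P ^ i := Nat.mod_lt _ hpi
  refine mem_filter.2 ⟨mem_range.2 hlt, ?_⟩
  rw [cnt_fiber B φ hP hlt]
  intro hzero
  apply hrc
  have hre : r % P ^ i + r / P ^ i * P ^ i = r := Nat.mod_add_div' r (P ^ i)
  have hdl : r / P ^ i < P := by
    apply Nat.div_lt_of_lt_mul
    rw [← pow_succ]
    exact hrr
  have := Finset.sum_eq_zero_iff.1 hzero (r / P ^ i) (mem_range.2 hdl)
  rwa [hre] at this

lemma child_exists {i r0 : ℕ} (hr0 : r0 ∈ occ P B φ i) :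
    ∃ r ∈ occ P B φ (i + 1), r % P ^ i = r0 := by
  obtain ⟨hrr, hrc⟩ := mem_filter.1 hr0
  rw [mem_range] at hrr
  rw [cnt_fiber B φ hP hrr] at hrc
  obtain ⟨t, htm, htc⟩ := Finset.exists_ne_zero_of_sum_ne_zero hrc
  rw [mem_range] at htm
  refine ⟨r0 + t * P ^ i, mem_filter.2 ⟨mem_range.2 (level_arith hP hrr htm), htc⟩, ?_⟩
  rw [Nat.add_mul_mod_self_right, Nat.mod_eq_of_lt hrr]

lemma NN_mono (i : ℕ) : NN P B φ i ≤ NN P B φ (i + 1) := by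
  apply Finset.card_le_card_of_surjOn (fun r => r % P ^ i)
  intro r0 hr0
  obtain ⟨r, hr, hre⟩ := child_exists B φ hP (by exact hr0)
  exact ⟨r, hr, hre⟩

lemma NN_split {i : ℕ} (hs : Splits P B φ i) : NN P B φ (i + 1) = P * NN P B φ i := by
  have hpi : 0 < P ^ i := pow_pos (Nat.zero_lt_of_lt hP) i
  have key : ∀ r0 t, r0 ∈ occ P B φ i → t < P → (r0 + t * P ^ i) ∈ occ P B φ (i + 1) := by
    intro r0 t hr0 ht
    obtain ⟨hrr, hrc⟩ := mem_filter.1 hr0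
    rw [mem_range] at hrr
    refine mem_filter.2 ⟨mem_range.2 (level_arith hP hrr ht), ?_⟩
    intro hzero
    apply hrc
    rw [cnt_fiber B φ hP hrr]
    apply Finset.sum_eq_zero
    intro t' ht'
    rw [← hzero]
    apply hs
    · exact mem_range.2 (level_arith hP hrr (mem_range.1 ht'))
    · exact mem_range.2 (level_arith hP hrr ht)
    · rw [Nat.add_mul_mod_self_right, Nat.add_mul_mod_self_right]
  have : NN P B φ (i + 1) = (range P ×ˢ occ P B φ i).card := by
    apply Finset.card_bij' (fun r _ => (r / P ^ i, r % P ^ i))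
      (fun st _ => st.2 + st.1 * P ^ i)
    · intro r hr
      obtain ⟨hrr, -⟩ := mem_filter.1 hr
      rw [mem_range] at hrr
      refine Finset.mem_product.2 ⟨mem_range.2 ?_, parent_mem B φ hP hr⟩
      apply Nat.div_lt_of_lt_mul
      rw [← pow_succ]
      exact hrr
    · intro st hst
      obtain ⟨h1, h2⟩ := Finset.mem_product.1 hst
      exact key st.2 st.1 h2 (mem_range.1 h1)
    · intro r hr
      exact Nat.mod_add_div' r (P ^ i)
    · intro st hst
      obtain ⟨h1, h2⟩ := Finset.mem_product.1 hst
      have hr0 : st.2 < P ^ i := mem_range.1 (mem_filter.1 h2).1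
      have e1 : (st.2 + st.1 * P ^ i) / P ^ i = st.1 := by
        rw [Nat.add_mul_div_right _ _ hpi, Nat.div_eq_of_lt hr0, zero_add]
      have e2 : (st.2 + st.1 * P ^ i) % P ^ i = st.2 := by
        rw [Nat.add_mul_mod_self_right, Nat.mod_eq_of_lt hr0]
      rw [e1, e2]
  rw [this, Finset.card_product, card_range, NN]

lemma NN_chain (i k : ℕ) (hik : i ≤ k) :
    NN P B φ i * P ^ (((Finset.Ico i k).filter (Splits P B φ)).card) ≤ NN P B φ k := by
  induction k, hik using Nat.le_induction with
  | base => simp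
  | succ k hik ih =>
    have hins : Finset.Ico i (k + 1) = insert k (Finset.Ico i k) := by
      rw [Nat.Ico_succ_right_eq_insert_Ico hik]
    rw [hins, Finset.filter_insert]
    by_cases hsk : Splits P B φ k
    · rw [if_pos hsk, Finset.card_insert_of_notMem (by simp [Finset.mem_filter])]
      rw [NN_split B φ hP hsk, pow_succ]
      calc NN P B φ i * (P ^ ((Finset.Ico i k).filter (Splits P B φ)).card * P)
          = (NN P B φ i * P ^ ((Finset.Ico i k).filter (Splits P B φ)).card) * P := by ring
      _ ≤ NN P B φ k * P := Nat.mul_le_mul_right _ ih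
      _ = P * NN P B φ k := Nat.mul_comm _ _
    · rw [if_neg hsk]
      exact le_trans ih (NN_mono B φ hP k)

def childSet (i r0 : ℕ) : Finset ℕ := (occ P B φ (i + 1)).filter fun r => r % P ^ i = r0

lemma sum_childSet (i : ℕ) :
    ∑ r0 ∈ occ P B φ i, (childSet (P := P) B φ i r0).card = NN P B φ (i + 1) := by
  rw [NN, Finset.card_eq_sum_card_fiberwise (f := fun r => r % P ^ i) (t := occ P B φ i)
    (fun r hr => parent_mem B φ hP hr)]
  rfl

lemma childSet_nonempty {i r0 : ℕ} (hr0 : r0 ∈ occ P B φ i) :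
    (childSet (P := P) B φ i r0).Nonempty := by
  obtain ⟨r, hr, hre⟩ := child_exists B φ hP hr0
  exact ⟨r, Finset.mem_filter.2 ⟨hr, hre⟩⟩

lemma childSet_card_of_splits {i r0 : ℕ} (hs : Splits P B φ i) (hr0 : r0 ∈ occ P B φ i) :
    (childSet (P := P) B φ i r0).card = P := by
  have hpi : 0 < P ^ i := pow_pos (Nat.zero_lt_of_lt hP) i
  have hrr : r0 < P ^ i := mem_range.1 (Finset.mem_filter.1 hr0).1
  have key : ∀ t, t < P → (r0 + t * P ^ i) ∈ occ P B φ (i + 1) := by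
    intro t ht
    obtain ⟨-, hrc⟩ := mem_filter.1 hr0
    refine mem_filter.2 ⟨mem_range.2 (level_arith hP hrr ht), ?_⟩
    intro hzero
    apply hrc
    rw [cnt_fiber B φ hP hrr]
    apply Finset.sum_eq_zero
    intro t' ht'
    rw [← hzero]
    apply hs
    · exact mem_range.2 (level_arith hP hrr (mem_range.1 ht'))
    · exact mem_range.2 (level_arith hP hrr ht)
    · rw [Nat.add_mul_mod_self_right, Nat.add_mul_mod_self_right]
  have he : childSet (P := P) B φ i r0 = (range P).image fun t => r0 + t * P ^ i := by
    ext r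
    simp only [childSet, Finset.mem_filter, Finset.mem_image, mem_range]
    constructor
    · rintro ⟨hr, hre⟩
      obtain ⟨hrlt, -⟩ := mem_filter.1 hr
      rw [mem_range] at hrlt
      refine ⟨r / P ^ i, ?_, ?_⟩
      · apply Nat.div_lt_of_lt_mul
        rw [← pow_succ]
        exact hrlt
      · rw [← hre]
        exact Nat.mod_add_div' r (P ^ i)
    · rintro ⟨t, ht, rfl⟩
      exact ⟨key t ht, by rw [Nat.add_mul_mod_self_right, Nat.mod_eq_of_lt hrr]⟩
  rw [he, Finset.card_image_of_injOn, card_range]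
  intro t1 h1 t2 h2 he2
  simp only at he2
  have := Nat.eq_of_mul_eq_mul_right hpi (by omega : t1 * P ^ i = t2 * P ^ i)
  exact this

lemma childSet_card_one (hB : B.Nonempty) {i : ℕ}
    (heq : NN P B φ (i + 1) = NN P B φ i) {r0 : ℕ} (hr0 : r0 ∈ occ P B φ i) :
    (childSet (P := P) B φ i r0).card = 1 := by
  have hsum : ∑ r ∈ occ P B φ i, (childSet (P := P) B φ i r).card = (occ P B φ i).card := by
    rw [sum_childSet B φ hP, heq]
    rfl
  exact all_one_of_sum_eq_card
    (fun r hr => Finset.card_pos.2 (childSet_nonempty B φ hP hr)) hsum r0 hr0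

lemma NN_eq_of_not_splits (hB : B.Nonempty) {n i : ℕ}
    (hNn : NN P B φ n = P ^ (((range n).filter (Splits P B φ)).card))
    (hi : i < n) (hns : ¬ Splits P B φ i) : NN P B φ (i + 1) = NN P B φ i := by
  have c1 : NN P B φ i ≥ P ^ (((Finset.Ico 0 i).filter (Splits P B φ)).card) := by
    have := NN_chain B φ hP 0 i (Nat.zero_le i)
    rwa [NN_zero B φ hP hB, one_mul] at this
  have c2 := NN_chain B φ hP (i + 1) n hi
  have hmono := NN_mono B φ hP i
  rcases Nat.lt_or_ge (NN P B φ i) (NN P B φ (i + 1)) with hlt | hge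
  · exfalso
    have hcard : (((Finset.Ico 0 i).filter (Splits P B φ)).card)
        + (((Finset.Ico (i + 1) n).filter (Splits P B φ)).card)
        = ((range n).filter (Splits P B φ)).card := by
      rw [Finset.range_eq_Ico]
      have hsplit : Finset.Ico 0 n = Finset.Ico 0 i ∪ Finset.Ico i n :=
        (Finset.Ico_union_Ico_eq_Ico (Nat.zero_le i) hi.le).symm
      have hsplit2 : Finset.Ico i n = insert i (Finset.Ico (i + 1) n) :=
        (Finset.insert_Ico_add_one_left_eq_Ico hi).symm
      rw [hsplit, Finset.filter_union, hsplit2, Finset.filter_insert, if_neg hns]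
      rw [Finset.card_union_of_disjoint]
      apply Finset.disjoint_filter_filter
      exact Finset.Ico_disjoint_Ico_consecutive 0 i n |>.mono_right
        (by rw [hsplit2]; exact Finset.subset_insert _ _)
    have hbig : NN P B φ n ≥ (NN P B φ i + 1)
        * P ^ (((Finset.Ico (i + 1) n).filter (Splits P B φ)).card) :=
      le_trans (Nat.mul_le_mul_right _ hlt) c2
    have hp2 : (0:ℕ) < P ^ (((Finset.Ico (i + 1) n).filter (Splits P B φ)).card) :=
      pow_pos (Nat.zero_lt_of_lt hP) _
    have : NN P B φ n > P ^ (((range n).filter (Splits P B φ)).card) := by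
      calc P ^ (((range n).filter (Splits P B φ)).card)
          = P ^ (((Finset.Ico 0 i).filter (Splits P B φ)).card)
            * P ^ (((Finset.Ico (i + 1) n).filter (Splits P B φ)).card) := by
            rw [← pow_add, hcard]
      _ < (NN P B φ i + 1) * P ^ (((Finset.Ico (i + 1) n).filter (Splits P B φ)).card) := by
            exact (Nat.mul_lt_mul_right hp2).2 (by omega)
      _ ≤ NN P B φ n := hbig
    omega
  · omega

lemma image_filter_eq_childSet {i : ℕ} {b0 : β} (hb0 : b0 ∈ B) :
    ((B.filter fun b => φ b % P ^ i = φ b0 % P ^ i).image fun b => φ b % P ^ (i + 1))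
      = childSet (P := P) B φ i (φ b0 % P ^ i) := by
  have hpi1 : 0 < P ^ (i + 1) := pow_pos (Nat.zero_lt_of_lt hP) _
  ext r
  simp only [Finset.mem_image, Finset.mem_filter, childSet, occ, Finset.mem_range]
  simp only [cnt]
  constructor
  · rintro ⟨b, ⟨hbB, hbmod⟩, rfl⟩
    refine ⟨⟨Nat.mod_lt _ hpi1, ?_⟩, ?_⟩
    · apply Finset.card_ne_zero_of_mem (a := b)
      exact Finset.mem_filter.2 ⟨hbB, rfl⟩
    · rw [Nat.mod_mod_of_dvd _ (pow_dvd_pow P (Nat.le_succ i)), hbmod]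
  · rintro ⟨⟨hrlt, hrc⟩, hre⟩
    have : (B.filter fun b => φ b % P ^ (i + 1) = r).Nonempty :=
      Finset.card_pos.1 (Nat.pos_of_ne_zero hrc)
    obtain ⟨b, hb⟩ := this
    obtain ⟨hbB, hbr⟩ := Finset.mem_filter.1 hb
    refine ⟨b, ⟨hbB, ?_⟩, hbr⟩
    rw [← Nat.mod_mod_of_dvd (φ b) (pow_dvd_pow P (Nat.le_succ i)), hbr, hre]


lemma bmem_occ {i : ℕ} {b0 : β} (hb0 : b0 ∈ B) : φ b0 % P ^ i ∈ occ P B φ i := by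
  have hpi : 0 < P ^ i := pow_pos (Nat.zero_lt_of_lt hP) i
  refine Finset.mem_filter.2 ⟨mem_range.2 (Nat.mod_lt _ hpi), ?_⟩
  apply Finset.card_ne_zero_of_mem (a := b0)
  exact Finset.mem_filter.2 ⟨hb0, rfl⟩

end Counting

lemma pow_mod_eq {ζ : ℂ} {N : ℕ} (h1 : ζ ^ N = 1) (k : ℕ) : ζ ^ (k % N) = ζ ^ k := by
  conv_rhs => rw [← Nat.div_add_mod k N]
  rw [pow_add, pow_mul, h1, one_pow, one_mul]

lemma splits_of_vanish {γ : Type*} [DecidableEq γ] {p : ℕ} (hp : p.Prime) (i : ℕ)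
    (B : Finset γ) (φ : γ → ℕ) {ζ : ℂ} (hζ : IsPrimitiveRoot ζ (p ^ (i + 1)))
    (h0 : ∑ b ∈ B, ζ ^ (φ b) = 0) : Splits p B φ i := by
  have hpos : 0 < p ^ (i + 1) := pow_pos hp.pos _
  have hgroup : ∑ r ∈ range (p ^ (i + 1)), ((cnt p B φ (i + 1) r : ℂ)) * ζ ^ r = 0 := by
    rw [← h0, ← Finset.sum_fiberwise_of_maps_to
      (g := fun b => φ b % p ^ (i + 1)) (fun b _ => mem_range.2 (Nat.mod_lt _ hpos))
      (fun b => ζ ^ (φ b))]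
    apply Finset.sum_congr rfl
    intro r _
    have he : ∀ b ∈ B.filter (fun b => φ b % p ^ (i + 1) = r), ζ ^ (φ b) = ζ ^ r := by
      intro b hb
      rw [← (Finset.mem_filter.1 hb).2, pow_mod_eq hζ.pow_eq_one]
    rw [Finset.sum_congr rfl he, Finset.sum_const, cnt, nsmul_eq_mul]
  exact fun r hr r' hr' hre => flat_of_sum_zero hp i _ hζ hgroup r hr r' hr' hre

lemma sum_zmod_val_pow_eq_zero {M : ℕ} [NeZero M] {ζ : ℂ} (hζ1 : ζ ≠ 1) (hζM : ζ ^ M = 1) :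
    ∑ y : ZMod M, ζ ^ (y.val) = 0 := by
  have : ∑ y : ZMod M, ζ ^ (y.val) = ∑ k ∈ range M, ζ ^ k := by
    refine Finset.sum_nbij' (fun y : ZMod M => y.val) (fun k => (k : ZMod M)) ?_ ?_ ?_ ?_ ?_
    · intro y _
      exact mem_range.2 (ZMod.val_lt y)
    · intro k _
      exact mem_univ _
    · intro y _
      exact ZMod.natCast_zmod_val y
    · intro k hk
      exact ZMod.val_natCast_of_lt (mem_range.1 hk)
    · intro y _
      rfl

  rw [this, geom_sum_eq hζ1, hζM, sub_self, zero_div]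

section Tijdeman

variable {G : Type*} [AddCommGroup G] [Fintype G] [DecidableEq G]
variable {q : ℕ} [NeZero q]

abbrev TileCfg (Ω T : Finset G) (q : ℕ) [NeZero q] (g : G) : Type _ :=
  {z : G × (ZMod q → G) // z.1 ∈ Ω ∧ (∀ i, z.2 i ∈ T) ∧ z.1 + ∑ i, z.2 i = g}

instance tileCfgAction (Ω T : Finset G) (g : G) :
    MulAction (Multiplicative (ZMod q)) (TileCfg Ω T q g) where
  smul k z := ⟨(z.1.1, fun i => z.1.2 (i + k.toAdd)), z.2.1, fun i => z.2.2.1 _, by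
     have h : ∑ i, z.1.2 (i + k.toAdd) = ∑ i, z.1.2 i :=
       Fintype.sum_equiv (Equiv.addRight k.toAdd) _ _ (fun i => rfl)
     rw [h]; exact z.2.2.2⟩
  one_smul z := Subtype.ext (Prod.ext rfl (funext fun i => by
     show z.1.2 (i + (1 : Multiplicative (ZMod q)).toAdd) = z.1.2 i
     simp))
  mul_smul k k' z := Subtype.ext (Prod.ext rfl (funext fun i => by
     show z.1.2 (i + (k * k').toAdd) = z.1.2 (i + k.toAdd + k'.toAdd)
     rw [toAdd_mul, add_assoc]))

lemma tileCfg_smul_snd (Ω T : Finset G) (g : G) (k : Multiplicative (ZMod q))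
    (z : TileCfg Ω T q g) (i : ZMod q) : (k • z).1.2 i = z.1.2 (i + k.toAdd) := rfl

lemma card_tileCfg {Ω T : Finset G} (htile : IsTilingPair Ω T) (g : G) :
    Nat.card (TileCfg Ω T q g) = T.card ^ (q - 1) := by
  classical
  let f : TileCfg Ω T q g → ({i : ZMod q // i ≠ 0} → {t : G // t ∈ T}) :=
    fun z i => ⟨z.1.2 i.1, z.2.2.1 i.1⟩
  have hbij : Function.Bijective f := by
    constructor
    · rintro ⟨⟨z1, z2⟩, hz1, hz2, hz3⟩ ⟨⟨w1, w2⟩, hw1, hw2, hw3⟩ h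
      have hsnd : ∀ i : ZMod q, i ≠ 0 → z2 i = w2 i := by
        intro i hi
        exact Subtype.ext_iff.1 (congrFun h ⟨i, hi⟩)
      have hsum : ∑ i ∈ Finset.univ.erase (0 : ZMod q), z2 i
          = ∑ i ∈ Finset.univ.erase (0 : ZMod q), w2 i :=
        Finset.sum_congr rfl (fun i hi => hsnd i (Finset.ne_of_mem_erase hi))
      obtain ⟨x, -, hu⟩ := htile (g - ∑ i ∈ Finset.univ.erase (0 : ZMod q), z2 i)
      have e1 : (z1, z2 0) = x := by
        apply hu
        refine ⟨hz1, hz2 0, ?_⟩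
        rw [eq_sub_iff_add_eq]
        show z1 + z2 0 + _ = g
        rw [add_assoc, Finset.add_sum_erase Finset.univ z2 (Finset.mem_univ 0)]
        exact hz3
      have e2 : (w1, w2 0) = x := by
        apply hu
        refine ⟨hw1, hw2 0, ?_⟩
        rw [hsum, eq_sub_iff_add_eq]
        show w1 + w2 0 + _ = g
        rw [add_assoc, Finset.add_sum_erase Finset.univ w2 (Finset.mem_univ 0)]
        exact hw3
      have e3 := e1.trans e2.symm
      have h1 : z1 = w1 := congrArg Prod.fst e3
      have h2 : z2 0 = w2 0 := congrArg Prod.snd e3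
      apply Subtype.ext
      show (z1, z2) = (w1, w2)
      rw [Prod.mk.injEq]
      refine ⟨h1, funext fun i => ?_⟩
      by_cases hi : i = 0
      · subst hi; exact h2
      · exact hsnd i hi
    · intro w
      obtain ⟨⟨ω, t0⟩, ⟨hω, ht0, hsum⟩, -⟩ := htile
        (g - ∑ i ∈ Finset.univ.erase (0 : ZMod q),
          (if h : i = 0 then 0 else ((w ⟨i, h⟩ : {t : G // t ∈ T}) : G)))
      let v : ZMod q → G := fun i => if h : i = 0 then t0 else (w ⟨i, h⟩ : {t : G // t ∈ T})
      have hvW : ∀ i ∈ Finset.univ.erase (0 : ZMod q),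
          v i = (if h : i = 0 then 0 else ((w ⟨i, h⟩ : {t : G // t ∈ T}) : G)) := by
        intro i hi
        have hi0 := Finset.ne_of_mem_erase hi
        simp only [v, dif_neg hi0]
      refine ⟨⟨(ω, v), hω, ?_, ?_⟩, ?_⟩
      · intro i
        show v i ∈ T
        by_cases hi : i = 0
        · subst hi; simpa only [v, dif_pos] using ht0
        · simp only [v, dif_neg hi]; exact (w ⟨i, hi⟩).2
      · show ω + ∑ i, v i = g
        rw [← Finset.add_sum_erase Finset.univ v (Finset.mem_univ 0),
          Finset.sum_congr rfl hvW]
        have hv0 : v 0 = t0 := by simp [v]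
        rw [hv0, ← add_assoc]
        simp only at hsum
        rw [hsum]
        abel
      · funext i
        apply Subtype.ext
        show v i.1 = (w i : G)
        simp only [v, dif_neg i.2]
  rw [Nat.card_congr (Equiv.ofBijective f hbij), Nat.card_eq_fintype_card,
    Fintype.card_fun, Fintype.card_coe]
  congr 1
  rw [Fintype.card_subtype_compl, ZMod.card, Fintype.card_subtype_eq]

lemma card_fixed_tileCfg (Ω T : Finset G) (g : G) :
    Nat.card (MulAction.fixedPoints (Multiplicative (ZMod q)) (TileCfg Ω T q g))
      = ((Ω ×ˢ T).filter fun z => z.1 + q • z.2 = g).card := by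
  classical
  have hcard : q = Fintype.card (ZMod q) := (ZMod.card q).symm
  let e : MulAction.fixedPoints (Multiplicative (ZMod q)) (TileCfg Ω T q g)
      ≃ {z : G × G // z.1 ∈ Ω ∧ z.2 ∈ T ∧ z.1 + q • z.2 = g} :=
    { toFun := fun z => ⟨(z.1.1.1, z.1.1.2 0), z.1.2.1, z.1.2.2.1 0, by
        have hconst : ∀ i : ZMod q, z.1.1.2 i = z.1.1.2 0 := by
          intro i
          have hz := z.2 (Multiplicative.ofAdd i)
          have h2 := congrArg (fun w : TileCfg Ω T q g => w.1.2 0) hz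
          have h3 : z.1.1.2 (0 + (Multiplicative.ofAdd i).toAdd) = z.1.1.2 0 := h2
          rwa [toAdd_ofAdd, zero_add] at h3
        have hs := z.1.2.2.2
        have : ∑ i, z.1.1.2 i = q • z.1.1.2 0 := by
          rw [Finset.sum_congr rfl (fun i _ => hconst i), Finset.sum_const,
            Finset.card_univ, ← hcard]
        rw [this] at hs
        exact hs⟩
      invFun := fun x => ⟨⟨(x.1.1, fun _ => x.1.2), x.2.1, fun _ => x.2.2.1, by
          show x.1.1 + ∑ _i : ZMod q, x.1.2 = g
          rw [Finset.sum_const, Finset.card_univ, ← hcard]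
          exact x.2.2.2⟩, by
        intro k
        apply Subtype.ext
        apply Prod.ext rfl
        funext i
        rfl⟩
      left_inv := fun z => by
        apply Subtype.ext
        apply Subtype.ext
        refine Prod.ext_iff.2 ⟨rfl, funext fun i => ?_⟩
        show z.1.1.2 0 = z.1.1.2 i
        have hz := z.2 (Multiplicative.ofAdd i)
        have h2 := congrArg (fun w : TileCfg Ω T q g => w.1.2 0) hz
        have h3 : z.1.1.2 (0 + (Multiplicative.ofAdd i).toAdd) = z.1.1.2 0 := h2
        rw [toAdd_ofAdd, zero_add] at h3
        exact h3.symm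
      right_inv := fun x => by
        apply Subtype.ext
        rfl }
  rw [Nat.card_congr e, Nat.card_eq_fintype_card, Fintype.card_subtype]
  congr 1
  ext z
  simp only [Finset.mem_filter, Finset.mem_product, Finset.mem_univ, true_and, and_assoc]

lemma tijdeman_count {Ω T : Finset G} (hq : q.Prime) (hT : ¬ q ∣ T.card)
    (htile : IsTilingPair Ω T) :
    ∀ g : G, ((Ω ×ˢ T).filter fun z => z.1 + q • z.2 = g).card = 1 := by
  classical
  haveI : Fact q.Prime := ⟨hq⟩
  have hpg : IsPGroup q (Multiplicative (ZMod q)) := by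
    apply IsPGroup.of_card (n := 1)
    rw [Nat.card_congr Multiplicative.toAdd, Nat.card_zmod, pow_one]
  have hmod : ∀ g : G, ((Ω ×ˢ T).filter fun z => z.1 + q • z.2 = g).card ≡ 1 [MOD q] := by
    intro g
    have h1 := hpg.card_modEq_card_fixedPoints (TileCfg Ω T q g)
    rw [card_tileCfg htile g, card_fixed_tileCfg Ω T g] at h1
    have h2 : T.card ^ (q - 1) ≡ 1 [MOD q] := by
      rw [← ZMod.natCast_eq_natCast_iff]
      push_cast
      exact ZMod.pow_card_sub_one_eq_one
        (by rwa [Ne, ZMod.natCast_eq_zero_iff])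
    exact (h1.symm.trans h2)
  have hge : ∀ g : G, 1 ≤ ((Ω ×ˢ T).filter fun z => z.1 + q • z.2 = g).card := by
    intro g
    by_contra hc
    push_neg at hc
    interval_cases h : ((Ω ×ˢ T).filter fun z => z.1 + q • z.2 = g).card
    · have := hmod g
      rw [h] at this
      have : q ∣ 1 := (Nat.modEq_zero_iff_dvd.1 this.symm)
      exact Nat.Prime.one_lt hq |>.ne' (Nat.dvd_one.1 this)
  have hsum : ∑ g : G, ((Ω ×ˢ T).filter fun z => z.1 + q • z.2 = g).card
      = Fintype.card G := by
    rw [← Finset.card_eq_sum_card_fiberwise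
      (f := fun z : G × G => z.1 + q • z.2) (s := Ω ×ˢ T) (t := Finset.univ)
      (fun x _ => Finset.mem_univ _), Finset.card_product]
    exact tiling_card_mul htile
  intro g
  exact all_one_of_sum_eq_card (fun g _ => hge g) (by rw [hsum]; simp) g (Finset.mem_univ g)

end Tijdeman

/-- If a tile `Ω` of `ℤ_{p^n} × ℤ_q` has cardinality `p^m q`, then each slice
`Ω_j = {x : (x, j) ∈ Ω}` has cardinality `p^m` and all slices are `p`-homogeneous
with a common branched level set. -/
theorem tile_slices_pHomogeneous_common_levels (p q n m : ℕ)
    (hp : p.Prime) (hq : q.Prime) (hpq : p ≠ q) [NeZero q] [NeZero (p ^ n)]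
    (Ω : Finset (ZMod (p ^ n) × ZMod q)) (htile : ∃ T, IsTilingPair Ω T)
    (hcard : Ω.card = p ^ m * q)
    (Ωj : ZMod q → Finset (ZMod (p ^ n)))
    (hΩj : ∀ j, Ωj j = Finset.univ.filter fun x => (x, j) ∈ Ω) :
    (∀ j : ZMod q, (Ωj j).card = p ^ m) ∧
      ∃ I, ∀ j : ZMod q, IsPHomogeneous p n (Ωj j) I := by
  classical
  obtain ⟨T, htile⟩ := htile
  have hp1 : 1 < p := hp.one_lt
  have hΩT := tiling_card_mul htile
  rw [Fintype.card_prod, ZMod.card, ZMod.card, hcard] at hΩT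
  have hmain : p ^ m * T.card = p ^ n := by
    have h2 : (p ^ m * T.card) * q = p ^ n * q := by rw [← hΩT]; ring
    exact Nat.eq_of_mul_eq_mul_right hq.pos h2
  have hTpos : 0 < T.card := by
    rcases Nat.eq_zero_or_pos T.card with h | h
    · rw [h, Nat.mul_zero] at hmain
      exact absurd hmain.symm (pow_pos hp.pos n).ne'
    · exact h
  have hmn : m ≤ n := by
    by_contra h
    push_neg at h
    have h1 : p ^ n < p ^ m := Nat.pow_lt_pow_right hp1 h
    have h2 : p ^ m ≤ p ^ m * T.card := Nat.le_mul_of_pos_right _ hTpos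
    omega
  have hT : T.card = p ^ (n - m) := by
    have h2 : p ^ m * T.card = p ^ m * p ^ (n - m) := by
      rw [hmain, ← pow_add]
      congr 1
      omega
    exact Nat.eq_of_mul_eq_mul_left (pow_pos hp.pos m) h2
  have hqT : ¬ q ∣ T.card := by
    rw [hT]
    intro hdvd
    have h1 : q ∣ p := hq.dvd_of_dvd_pow hdvd
    exact hpq (((Nat.prime_dvd_prime_iff_eq hq hp).1 h1).symm)
  have hq0 : ∀ a : ZMod q, q • a = 0 := fun a => by
    rw [nsmul_eq_mul, ZMod.natCast_self, zero_mul]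
  have hcount := tijdeman_count hq hqT htile
  have hcov : ∀ (j : ZMod q) (y : ZMod (p ^ n)),
      (((Ωj j) ×ˢ T).filter fun z => z.1 + q • z.2.1 = y).card = 1 := by
    intro j y
    rw [← hcount (y, j)]
    apply Finset.card_nbij' (i := fun z => ((z.1, j), z.2)) (j := fun z => (z.1.1, z.2))
    · intro z hz
      obtain ⟨hzm, hzs⟩ := Finset.mem_filter.1 hz
      obtain ⟨hz1, hz2⟩ := Finset.mem_product.1 hzm
      refine Finset.mem_filter.2 ⟨Finset.mem_product.2 ⟨?_, hz2⟩, ?_⟩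
      · have h3 := hΩj j ▸ hz1
        exact (Finset.mem_filter.1 h3).2
      · show (z.1, j) + q • z.2 = (y, j)
        have h4 : (z.1, j) + q • z.2 = (z.1 + q • z.2.1, j + q • z.2.2) := rfl
        rw [h4, hq0 z.2.2, add_zero, hzs]
    · intro z hz
      obtain ⟨hzm, hzs⟩ := Finset.mem_filter.1 hz
      obtain ⟨hz1, hz2⟩ := Finset.mem_product.1 hzm
      have h5 : z.1 + q • z.2 = (z.1.1 + q • z.2.1, z.1.2 + q • z.2.2) := rfl
      rw [h5, hq0 z.2.2, add_zero] at hzs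
      have h6 : z.1.1 + q • z.2.1 = y := congrArg Prod.fst hzs
      have h7 : z.1.2 = j := congrArg Prod.snd hzs
      refine Finset.mem_filter.2 ⟨Finset.mem_product.2 ⟨?_, hz2⟩, h6⟩
      rw [hΩj j]
      refine Finset.mem_filter.2 ⟨Finset.mem_univ _, ?_⟩
      rw [← h7]
      exact hz1
    · intro z hz
      rfl
    · intro z hz
      obtain ⟨hzm, hzs⟩ := Finset.mem_filter.1 hz
      have h5 : z.1 + q • z.2 = (z.1.1 + q • z.2.1, z.1.2 + q • z.2.2) := rfl
      rw [h5, hq0 z.2.2, add_zero] at hzs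
      have h7 : z.1.2 = j := congrArg Prod.snd hzs
      show ((z.1.1, j), z.2) = z
      rw [← h7]
  have hslice : ∀ j, (Ωj j).card * T.card = p ^ n := by
    intro j
    have hfib := Finset.card_eq_sum_card_fiberwise
      (f := fun z : ZMod (p ^ n) × (ZMod (p ^ n) × ZMod q) => z.1 + q • z.2.1)
      (s := (Ωj j) ×ˢ T) (t := Finset.univ) (fun x _ => Finset.mem_univ _)
    rw [Finset.card_product] at hfib
    rw [hfib, Finset.sum_congr rfl (fun y _ => hcov j y), Finset.sum_const,
      Finset.card_univ, ZMod.card, smul_eq_mul, mul_one]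
  have hslicecard : ∀ j, (Ωj j).card = p ^ m := by
    intro j
    apply Nat.eq_of_mul_eq_mul_right hTpos
    exact (hslice j).trans hmain.symm
  refine ⟨hslicecard, ?_⟩
  refine ⟨(range n) \ ((range n).filter (Splits p T (fun t => (q • t.1).val))), fun j => ?_⟩
  set A := Ωj j with hA
  have hAcard : A.card = p ^ m := hslicecard j
  have hAne : A.Nonempty := Finset.card_pos.1 (by rw [hAcard]; exact pow_pos hp.pos m)
  have hTne : T.Nonempty := Finset.card_pos.1 hTpos
  have hdich : ∀ i ∈ range n,
      Splits p A ZMod.val i ∨ Splits p T (fun t => (q • t.1).val) i := by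
    intro i hi
    have hin : i + 1 ≤ n := mem_range.1 hi
    have hN1 : (p ^ (i + 1)) ≠ 0 := (pow_pos hp.pos _).ne'
    obtain ⟨ζ, hζ⟩ : ∃ ζ : ℂ, IsPrimitiveRoot ζ (p ^ (i + 1)) :=
      ⟨_, Complex.isPrimitiveRoot_exp _ hN1⟩
    have hζpn : ζ ^ (p ^ n) = 1 := by
      have he : p ^ n = p ^ (i + 1) * p ^ (n - (i + 1)) := by
        rw [← pow_add]
        congr 1
        omega
      rw [he, pow_mul, hζ.pow_eq_one, one_pow]
    have hζ1 : ζ ≠ 1 := hζ.ne_one (Nat.one_lt_pow (Nat.succ_ne_zero i) hp1)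
    have hzero : (∑ x ∈ A, ζ ^ (x.val)) * (∑ t ∈ T, ζ ^ ((q • t.1).val)) = 0 := by
      rw [Finset.sum_mul_sum, ← Finset.sum_product']
      have e1 : ∀ z ∈ A ×ˢ T, ζ ^ (z.1.val) * ζ ^ ((q • z.2.1).val)
          = ζ ^ ((z.1 + q • z.2.1).val) := by
        intro z _
        rw [ZMod.val_add, pow_mod_eq hζpn, pow_add]
      rw [Finset.sum_congr rfl e1]
      rw [← Finset.sum_fiberwise_of_maps_to
        (g := fun z : ZMod (p ^ n) × (ZMod (p ^ n) × ZMod q) => z.1 + q • z.2.1)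
        (fun z _ => Finset.mem_univ _)]
      have e2 : ∀ y ∈ (Finset.univ : Finset (ZMod (p ^ n))),
          ∑ z ∈ (A ×ˢ T).filter (fun z => z.1 + q • z.2.1 = y),
            ζ ^ ((z.1 + q • z.2.1).val) = ζ ^ (y.val) := by
        intro y _
        have e3 : ∀ z ∈ (A ×ˢ T).filter (fun z => z.1 + q • z.2.1 = y),
            ζ ^ ((z.1 + q • z.2.1).val) = ζ ^ (y.val) := by
          intro z hz
          rw [(Finset.mem_filter.1 hz).2]
        rw [Finset.sum_congr rfl e3, Finset.sum_const, hcov j y, one_smul]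
      rw [Finset.sum_congr rfl e2]
      exact sum_zmod_val_pow_eq_zero hζ1 hζpn
    rcases mul_eq_zero.1 hzero with h | h
    · exact Or.inl (splits_of_vanish hp i A ZMod.val hζ h)
    · exact Or.inr (splits_of_vanish hp i T (fun t => (q • t.1).val) hζ h)
  have hchainA := NN_chain A ZMod.val hp1 0 n (Nat.zero_le n)
  rw [NN_zero A ZMod.val hp1 hAne, one_mul, ← Finset.range_eq_Ico] at hchainA
  have hNA_le : NN p A ZMod.val n ≤ p ^ m := by
    rw [← hAcard]
    exact NN_le_card A ZMod.val hp1 n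
  have hSA_le : ((range n).filter (Splits p A ZMod.val)).card ≤ m :=
    (Nat.pow_le_pow_iff_right hp1).1 (le_trans hchainA hNA_le)
  have hchainT := NN_chain T (fun t => (q • t.1).val) hp1 0 n (Nat.zero_le n)
  rw [NN_zero T _ hp1 hTne, one_mul, ← Finset.range_eq_Ico] at hchainT
  have hNT_le : NN p T (fun t => (q • t.1).val) n ≤ p ^ (n - m) := by
    rw [← hT]
    exact NN_le_card T _ hp1 n
  have hSτ_le : ((range n).filter (Splits p T (fun t => (q • t.1).val))).card ≤ n - m :=
    (Nat.pow_le_pow_iff_right hp1).1 (le_trans hchainT hNT_le)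
  have hsub : range n ⊆ ((range n).filter (Splits p A ZMod.val))
      ∪ ((range n).filter (Splits p T (fun t => (q • t.1).val))) := by
    intro i hi
    rcases hdich i hi with h | h
    · exact Finset.mem_union_left _ (Finset.mem_filter.2 ⟨hi, h⟩)
    · exact Finset.mem_union_right _ (Finset.mem_filter.2 ⟨hi, h⟩)
  have hcardun : n ≤ ((range n).filter (Splits p A ZMod.val)).card
      + ((range n).filter (Splits p T (fun t => (q • t.1).val))).card := by
    calc n = (range n).card := (Finset.card_range n).symm
    _ ≤ _ := Finset.card_le_card hsub
    _ ≤ _ := Finset.card_union_le _ _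
  have hSAm : ((range n).filter (Splits p A ZMod.val)).card = m := by omega
  have hdisj : ((range n).filter (Splits p A ZMod.val))
      = range n \ ((range n).filter (Splits p T (fun t => (q • t.1).val))) := by
    apply Finset.eq_of_subset_of_card_le
    · intro i hiA
      have hir : i ∈ range n := (Finset.mem_filter.1 hiA).1
      refine Finset.mem_sdiff.2 ⟨hir, ?_⟩
      intro hiτ
      have hui := Finset.card_union_add_card_inter
        ((range n).filter (Splits p A ZMod.val))
        ((range n).filter (Splits p T (fun t => (q • t.1).val)))
      have h2 : 0 < (((range n).filter (Splits p A ZMod.val))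
          ∩ ((range n).filter (Splits p T (fun t => (q • t.1).val)))).card :=
        Finset.card_pos.2 ⟨i, Finset.mem_inter.2 ⟨hiA, hiτ⟩⟩
      have h3 : n ≤ (((range n).filter (Splits p A ZMod.val))
          ∪ ((range n).filter (Splits p T (fun t => (q • t.1).val)))).card := by
        calc n = (range n).card := (Finset.card_range n).symm
        _ ≤ _ := Finset.card_le_card hsub
      have h4 := Finset.card_union_le
        ((range n).filter (Splits p A ZMod.val))
        ((range n).filter (Splits p T (fun t => (q • t.1).val)))
      omega
    · have h5 : (range n \ ((range n).filter (Splits p T (fun t => (q • t.1).val)))).card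
          = n - ((range n).filter (Splits p T (fun t => (q • t.1).val))).card := by
        rw [Finset.card_sdiff_of_subset (Finset.filter_subset _ _), Finset.card_range]
      omega
  have hNAn : NN p A ZMod.val n
      = p ^ (((range n).filter (Splits p A ZMod.val)).card) := by
    apply le_antisymm
    · rw [hSAm]
      exact hNA_le
    · exact hchainA
  constructor
  · exact Finset.sdiff_subset
  · intro i hi x hx
    have hir : i < n := mem_range.1 hi
    have hximg := image_filter_eq_childSet A ZMod.val hp1 (i := i) hx
    rw [hximg]
    by_cases hmem : i ∈ range n \ ((range n).filter (Splits p T (fun t => (q • t.1).val)))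
    · rw [if_pos hmem]
      have hiA : i ∈ (range n).filter (Splits p A ZMod.val) := by
        rw [hdisj]
        exact hmem
      exact childSet_card_of_splits A ZMod.val hp1 (Finset.mem_filter.1 hiA).2
        (bmem_occ A ZMod.val hp1 hx)
    · rw [if_neg hmem]
      have hiA : i ∉ (range n).filter (Splits p A ZMod.val) := by
        rw [hdisj]
        exact hmem
      have hns : ¬ Splits p A ZMod.val i := fun hs => hiA (Finset.mem_filter.2 ⟨hi, hs⟩)
      exact childSet_card_one A ZMod.val hp1 hAne
        (NN_eq_of_not_splits A ZMod.val hp1 hAne hNAn hir hns) (bmem_occ A ZMod.val hp1 hx)
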